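/- Let Δ ≠ 0, let m be a positive integer, and let S ⊆ ℤ contain the interval [−m, m]. Then the probability that the a.s. unique minimizer of X_Δ over [−m, m] ∩ ℤ equals the a.s. unique minimizer of X_Δ over S is at least 1 − (2·e^{−Δ²/8}/(1 − e^{−Δ²/8}))·e^{−m·Δ²/8}. -/

import Mathlib

open MeasureTheory ProbabilityTheory Filter

/-- Two-sided Gaussian random walk with drift `|Δ|/2`. -/
noncomputable def walkX {Ω : Type*} (ε : ℤ → Ω → ℝ) (Δ : ℝ) (i : ℤ) (ω : Ω) : ℝ :=
  if 0 < i then Real.sign Δ * (∑ j ∈ Finset.Icc (1 : ℤ) i, ε j ω) + (i : ℝ) * |Δ| / 2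
  else if i < 0 then
    -(Real.sign Δ * (∑ j ∈ Finset.Icc (i + 1) (0 : ℤ), ε j ω)) + ((|i| : ℤ) : ℝ) * |Δ| / 2
  else 0

/-- `L` is almost surely the unique minimizer of the process `f` over the set `S ⊆ ℤ`. -/
def IsASUniqueArgminOn {Ω : Type*} [MeasurableSpace Ω] (μ : Measure Ω)
    (f : ℤ → Ω → ℝ) (S : Set ℤ) (L : Ω → ℤ) : Prop :=
  ∀ᵐ ω ∂μ, L ω ∈ S ∧ ∀ t ∈ S, t ≠ L ω → f (L ω) ω < f t ω

/-! If the two minimizers differ, the minimizer `L` over `S` lies outside `[-m, m]` and beats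
the value `X_Δ(0) = 0`, so `X_Δ(L) ≤ 0`. For `t ≠ 0`, `X_Δ(t)` is a signed sum of `|t|` independent
standard Gaussians plus the drift `|t| |Δ| / 2`, so Hoeffding's bound gives
`P(X_Δ(t) ≤ 0) ≤ r ^ |t|` with `r = e^{-Δ²/8}`; a union bound over `|t| > m` leaves the geometric
tail `2 r^{m+1} / (1 - r)`. -/

open Real Finset
open scoped NNReal

lemma notMem_of_isUniqueMin_ne {α β : Type*} [Preorder β] {f : α → β} {T S : Set α}
    (hTS : T ⊆ S) {a b : α} (ha : a ∈ T) (ha_min : ∀ t ∈ T, t ≠ a → f a < f t)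
    (hb_min : ∀ t ∈ S, t ≠ b → f b < f t) (hab : a ≠ b) : b ∉ T := fun hb =>
  (ha_min b hb hab.symm).asymm (hb_min a (hTS ha) hab)

section Walk

variable {Ω : Type*} (ε : ℤ → Ω → ℝ) (Δ : ℝ)

lemma walkX_zero (ω : Ω) : walkX ε Δ 0 ω = 0 := by
  simp [walkX]

lemma walkX_of_pos {i : ℤ} (hi : 0 < i) (ω : Ω) :
    walkX ε Δ i ω = ∑ j ∈ Icc 1 i, Real.sign Δ * ε j ω + #(Icc 1 i) * (|Δ| / 2) := by
  have hcard : (#(Icc 1 i) : ℤ) = i := by rw [Int.card_Icc]; omega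
  rw [walkX, if_pos hi, ← mul_sum, ← Int.cast_natCast, hcard]
  ring

lemma walkX_of_neg {i : ℤ} (hi : i < 0) (ω : Ω) :
    walkX ε Δ i ω = ∑ j ∈ Icc (i + 1) 0, -Real.sign Δ * ε j ω + #(Icc (i + 1) 0) * (|Δ| / 2) := by
  have hcard : (#(Icc (i + 1) 0) : ℤ) = |i| := by rw [Int.card_Icc, abs_of_neg hi]; omega
  rw [walkX, if_neg hi.not_gt, if_pos hi, ← mul_sum, ← Int.cast_natCast, hcard]
  ring

end Walk

section Measure

variable {Ω : Type*} [MeasurableSpace Ω] {μ : Measure Ω}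

lemma ProbabilityTheory.HasSubgaussianMGF.of_map_eq_gaussianReal {X : Ω → ℝ} {v : ℝ≥0}
    (hX : μ.map X = gaussianReal 0 v) : HasSubgaussianMGF X v μ := by
  rw [← HasSubgaussianMGF.id_map_iff (aemeasurable_of_map_neZero (by rw [hX]; infer_instance)),
    hX]
  exact ⟨integrable_exp_mul_gaussianReal, fun t => by simp [mgf_id_gaussianReal]⟩

lemma ProbabilityTheory.HasSubgaussianMGF.const_mul_of_sq_eq_one {X : Ω → ℝ} {c : ℝ≥0}
    (hX : HasSubgaussianMGF X c μ) {s : ℝ} (hs : s ^ 2 = 1) :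
    HasSubgaussianMGF (fun ω => s * X ω) c μ := by
  convert hX.const_mul s
  simp only [hs]
  exact (one_mul c).symm

lemma measure_sum_add_card_mul_nonpos_le [IsProbabilityMeasure μ] {ι : Type*} {Y : ι → Ω → ℝ}
    (hindep : iIndepFun Y μ) (hY : ∀ i, HasSubgaussianMGF (Y i) 1 μ) {a : ℝ} (ha : 0 ≤ a)
    (F : Finset ι) :
    μ {ω | ∑ i ∈ F, Y i ω + #F * a ≤ 0} ≤ ENNReal.ofReal (exp (-#F * a ^ 2 / 2)) := by
  rcases F.eq_empty_or_nonempty with rfl | hF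
  · simp
  have hoeffding := HasSubgaussianMGF.measure_sum_ge_le_of_iIndepFun
    (hindep.comp (fun _ => Neg.neg) fun _ => measurable_neg) (fun i _ => (hY i).neg)
    (s := F) (ε := #F * a) (by positivity)
  have hcard : (0 : ℝ) < #F := by exact_mod_cast hF.card_pos
  have hset : {ω | ∑ i ∈ F, Y i ω + #F * a ≤ 0} = {ω | #F * a ≤ ∑ i ∈ F, (Neg.neg ∘ Y i) ω} := by
    ext ω
    simp only [Set.mem_ofPred_eq, Function.comp_apply, sum_neg_distrib]
    constructor <;> intro h <;> linarith
  rw [hset, ← ofReal_measureReal]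
  refine ENNReal.ofReal_le_ofReal (hoeffding.trans_eq ?_)
  congr 1
  simp only [sum_const, nsmul_eq_mul, mul_one, NNReal.coe_natCast]
  field_simp

lemma measure_walkX_nonpos_le [IsProbabilityMeasure μ] {ε : ℤ → Ω → ℝ} (hindep : iIndepFun ε μ)
    (hgauss : ∀ i, μ.map (ε i) = gaussianReal 0 1) {Δ : ℝ} (hΔ : Δ ≠ 0) {t : ℤ} (ht : t ≠ 0) :
    μ {ω | walkX ε Δ t ω ≤ 0} ≤ ENNReal.ofReal (exp (-(Δ ^ 2) / 8) ^ t.natAbs) := by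
  have hchernoff : ∀ s : ℝ, s ^ 2 = 1 → ∀ F : Finset ℤ,
      μ {ω | ∑ j ∈ F, s * ε j ω + #F * (|Δ| / 2) ≤ 0}
        ≤ ENNReal.ofReal (exp (-(Δ ^ 2) / 8) ^ #F) := by
    intro s hs F
    refine (measure_sum_add_card_mul_nonpos_le
      (hindep.comp (fun _ => (s * ·)) fun _ => measurable_const_mul s)
      (fun i => (HasSubgaussianMGF.of_map_eq_gaussianReal (hgauss i)).const_mul_of_sq_eq_one hs)
      (by positivity) F).trans_eq ?_
    rw [← exp_nat_mul, div_pow, sq_abs]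
    ring_nf
  have hsign : Real.sign Δ ^ 2 = 1 := by
    rcases hΔ.lt_or_gt with h | h <;> simp [Real.sign_of_neg, Real.sign_of_pos, h]
  rcases ht.lt_or_gt with h | h
  · have hcard : #(Icc (t + 1) 0) = t.natAbs := by rw [Int.card_Icc]; omega
    simp_rw [walkX_of_neg ε Δ h, ← hcard]
    exact hchernoff _ (by rw [neg_sq, hsign]) _
  · have hcard : #(Icc 1 t) = t.natAbs := by rw [Int.card_Icc]; omega
    simp_rw [walkX_of_pos ε Δ h, ← hcard]
    exact hchernoff _ hsign _

lemma measure_iUnion_natAbs_gt_le {B : ℤ → Set Ω} {r : ℝ} (hr0 : 0 ≤ r) (hr1 : r < 1)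
    (hB : ∀ t ≠ 0, μ (B t) ≤ ENNReal.ofReal (r ^ t.natAbs)) (m : ℕ) :
    μ (⋃ (t : ℤ) (_ : m < t.natAbs), B t) ≤ ENNReal.ofReal (2 * r ^ (m + 1) / (1 - r)) := by
  have hcover : (⋃ (t : ℤ) (_ : m < t.natAbs), B t)
      ⊆ ⋃ k : ℕ, (B (m + 1 + k : ℕ) ∪ B (-(m + 1 + k : ℕ))) := by
    simp only [Set.iUnion_subset_iff]
    intro t ht ω hω
    refine Set.mem_iUnion.2 ⟨t.natAbs - (m + 1), ?_⟩
    rw [Nat.add_sub_cancel' ht]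
    rcases Int.natAbs_eq t with h | h
    · exact Or.inl (h ▸ hω)
    · exact Or.inr (h ▸ hω)
  have hpair : ∀ k : ℕ, μ (B (m + 1 + k : ℕ) ∪ B (-(m + 1 + k : ℕ)))
      ≤ ENNReal.ofReal (2 * r ^ (m + 1) * r ^ k) := by
    intro k
    have hne : ((m + 1 + k : ℕ) : ℤ) ≠ 0 := by omega
    calc _ ≤ μ (B (m + 1 + k : ℕ)) + μ (B (-(m + 1 + k : ℕ))) := measure_union_le _ _
      _ ≤ ENNReal.ofReal (r ^ (m + 1 + k)) + ENNReal.ofReal (r ^ (m + 1 + k)) :=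
        add_le_add ((hB _ hne).trans_eq (by rw [Int.natAbs_natCast]))
          ((hB _ (neg_ne_zero.2 hne)).trans_eq (by rw [Int.natAbs_neg, Int.natAbs_natCast]))
      _ = _ := by
        rw [← ENNReal.ofReal_add (by positivity) (by positivity)]
        ring_nf
  calc _ ≤ μ (⋃ k : ℕ, (B (m + 1 + k : ℕ) ∪ B (-(m + 1 + k : ℕ)))) := measure_mono hcover
    _ ≤ ∑' k : ℕ, μ (B (m + 1 + k : ℕ) ∪ B (-(m + 1 + k : ℕ))) := measure_iUnion_le _
    _ ≤ ∑' k : ℕ, ENNReal.ofReal (2 * r ^ (m + 1) * r ^ k) := ENNReal.tsum_le_tsum hpair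
    _ = ENNReal.ofReal (∑' k : ℕ, 2 * r ^ (m + 1) * r ^ k) :=
      (ENNReal.ofReal_tsum_of_nonneg (fun k => by positivity)
        ((summable_geometric_of_lt_one hr0 hr1).mul_left _)).symm
    _ = _ := by rw [tsum_mul_left, tsum_geometric_of_lt_one hr0 hr1, div_eq_mul_inv]

end Measure

theorem argmin_restriction_agreement_general
    {Ω : Type*} [MeasurableSpace Ω] (μ : Measure Ω) [IsProbabilityMeasure μ]
    (ε : ℤ → Ω → ℝ)
    (hindep : iIndepFun ε μ)
    (hgauss : ∀ i, Measure.map (ε i) μ = gaussianReal 0 1)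
    (Δ : ℝ) (hΔ : Δ ≠ 0) (m : ℕ)
    (S : Set ℤ) (hS : Set.Icc (-(m : ℤ)) (m : ℤ) ⊆ S)
    (Lm LS : Ω → ℤ)
    (hLm : IsASUniqueArgminOn μ (walkX ε Δ) (Set.Icc (-(m : ℤ)) (m : ℤ)) Lm)
    (hLS : IsASUniqueArgminOn μ (walkX ε Δ) S LS) :
    1 - ENNReal.ofReal
          (2 * Real.exp (-(Δ ^ 2) / 8) / (1 - Real.exp (-(Δ ^ 2) / 8)) *
            Real.exp (-(m : ℝ) * Δ ^ 2 / 8))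
      ≤ μ {ω | Lm ω = LS ω} := by
  set r := exp (-(Δ ^ 2) / 8)
  have hr1 : r < 1 := by
    have : 0 < Δ ^ 2 := by positivity
    exact exp_lt_one_iff.2 (by linarith)
  have hbad :
      μ {ω | Lm ω = LS ω}ᶜ ≤ μ (⋃ (t : ℤ) (_ : m < t.natAbs), {ω | walkX ε Δ t ω ≤ 0}) := by
    refine measure_mono_ae ?_
    filter_upwards [hLm, hLS] with ω ⟨hLm_mem, hLm_min⟩ ⟨_, hLS_min⟩ hne
    have hout := notMem_of_isUniqueMin_ne (f := (walkX ε Δ · ω)) hS hLm_mem hLm_min hLS_min hne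
    have h0 : (0 : ℤ) ∈ Set.Icc (-(m : ℤ)) m := by simp
    have hneg := hLS_min 0 (hS h0) fun h => hout (h ▸ h0)
    rw [walkX_zero] at hneg
    simp only [Set.mem_Icc, not_and_or, not_le] at hout
    exact Set.mem_iUnion₂.2 ⟨LS ω, by omega, hneg.le⟩
  have hbound : 2 * r / (1 - r) * exp (-m * Δ ^ 2 / 8) = 2 * r ^ (m + 1) / (1 - r) := by
    rw [show exp (-m * Δ ^ 2 / 8) = r ^ m by rw [← exp_nat_mul]; ring_nf, pow_succ]
    ring
  rw [hbound, tsub_le_iff_right]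
  calc 1 = μ Set.univ := measure_univ.symm
    _ ≤ μ {ω | Lm ω = LS ω} + μ {ω | Lm ω = LS ω}ᶜ := measure_univ_le_add_compl _
    _ ≤ _ := add_le_add le_rfl (hbad.trans (measure_iUnion_natAbs_gt_le (exp_pos _).le hr1
      (fun t ht => measure_walkX_nonpos_le hindep hgauss hΔ ht) m))

/-- With probability at least
`1 − (2 e^{−Δ²/8}/(1 − e^{−Δ²/8})) e^{−mΔ²/8}`, the minimizer of `X_Δ` over `[−m,m]`
agrees with its minimizer over any `S ⊇ [−m,m]`. -/
theorem argmin_restriction_agreement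
    {Ω : Type*} [MeasurableSpace Ω] (μ : Measure Ω) [IsProbabilityMeasure μ]
    (ε : ℤ → Ω → ℝ)
    (hmeas : ∀ i, Measurable (ε i))
    (hindep : iIndepFun ε μ)
    (hgauss : ∀ i, Measure.map (ε i) μ = gaussianReal 0 1)
    (Δ : ℝ) (hΔ : Δ ≠ 0) (m : ℕ) (hm : 0 < m)
    (S : Set ℤ) (hS : Set.Icc (-(m : ℤ)) (m : ℤ) ⊆ S)
    (Lm LS : Ω → ℤ)
    (hLm : IsASUniqueArgminOn μ (walkX ε Δ) (Set.Icc (-(m : ℤ)) (m : ℤ)) Lm)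
    (hLS : IsASUniqueArgminOn μ (walkX ε Δ) S LS) :
    1 - ENNReal.ofReal
          (2 * Real.exp (-(Δ ^ 2) / 8) / (1 - Real.exp (-(Δ ^ 2) / 8)) *
            Real.exp (-(m : ℝ) * Δ ^ 2 / 8))
      ≤ μ {ω | Lm ω = LS ω} :=
  argmin_restriction_agreement_general μ ε hindep hgauss Δ hΔ m S hS Lm LS hLm hLS
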